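/- arXiv:2101.04106 — 2 statements merged into one kernel-verified Lean document; each statement's English description precedes it below -/
import Mathlib

section
/- Let Y be a metric space. For each k ∈ ℕ, let h_k : Y → Y be a homeomorphism, and let V_k ⊆ Y be a set such that h_k is the identity on the complement of V_k. Define H_n = h_n ∘ h_{n-1} ∘ ⋯ ∘ h_1. Suppose (1) diam(⋃_{k ≥ n} V_k) → 0 as n → ∞, (2) there exists a compact set A ⊆ Y with ⋃_{k ≥ 1} V_k ⊆ interior(A), and (3) the pointwise limit H_∞ = lim_{n→∞} H_n exists and is a bijection of Y. Then H_∞ is a homeomorphism of Y. -/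
open Filter Topology

/-- The composite `h (n-1) ∘ ⋯ ∘ h 1 ∘ h 0` of the first `n` maps of a sequence. -/
def iterComp {Y : Type*} (h : ℕ → Y → Y) : ℕ → Y → Y
  | 0 => id
  | n + 1 => h n ∘ iterComp h n

/-!
A point moved by `h k` lies in `V k`, and since `h k` is injective and fixes `(V k)ᶜ` it stays
in `V k`. Hence for `m ≤ n` the points `H_n y` and `H_m y` either coincide or both lie in the
tail `⋃_{k ≥ m} V k`, so `H_n → H_∞` uniformly and `H_∞` is continuous. Off the compact set
`A` every `H_n`, hence `H_∞`, is the identity; so preimages of compact sets are compact, `H_∞`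
is proper and therefore closed, and a closed continuous bijection is a homeomorphism.
-/

open Set Metric

theorem Function.Injective.mapsTo_of_eqOn_compl {α : Type*} {f : α → α} {s : Set α}
    (hf : f.Injective) (hfix : EqOn f id sᶜ) : MapsTo f s s := by
  intro y hy
  by_contra hfy
  have hffy : f (f y) = f y := hfix hfy
  rw [hf hffy] at hfy
  exact hfy hy

theorem isHomeomorph_of_bijective_of_eqOn_compl {Y : Type*} [TopologicalSpace Y] [T2Space Y]
    [CompactlyCoherentSpace Y] {f : Y → Y} {A : Set Y} (hA : IsCompact A) (hf : Continuous f)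
    (hbij : f.Bijective) (hfix : EqOn f id Aᶜ) : IsHomeomorph f := by
  have hproper : IsProperMap f := by
    refine isProperMap_iff_isCompact_preimage.2 ⟨hf, fun K hK => ?_⟩
    have hsub : f ⁻¹' K ⊆ A ∪ K := fun y hy => by
      by_cases hyA : y ∈ A
      · exact Or.inl hyA
      · rw [mem_preimage, hfix hyA] at hy
        exact Or.inr hy
    exact (hA.union hK).of_isClosed_subset (hK.isClosed.preimage hf) hsub
  exact isHomeomorph_iff_continuous_isClosedMap_bijective.2 ⟨hf, hproper.isClosedMap, hbij⟩

section iterComp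

variable {Y : Type*} {h : ℕ → Y → Y}

theorem continuous_iterComp [TopologicalSpace Y] (hh : ∀ k, Continuous (h k)) (n : ℕ) :
    Continuous (iterComp h n) := by
  induction n with
  | zero => exact continuous_id
  | succ n ih => exact (hh n).comp ih

variable {V : ℕ → Set Y}

theorem iterComp_apply_of_notMem_iUnion (hid : ∀ k, ∀ y ∉ V k, h k y = y) {y : Y} (hy : y ∉ ⋃ k, V k) (n : ℕ) :
    iterComp h n y = y := by
  induction n with
  | zero => rfl
  | succ n ih =>
    rw [iterComp, Function.comp_apply, ih]
    exact hid n y fun hyn => hy (mem_iUnion.2 ⟨n, hyn⟩)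

theorem iterComp_eq_or_mem_tail (hid : ∀ k, ∀ y ∉ V k, h k y = y)
    (hinj : ∀ k, (h k).Injective) {m n : ℕ} (hmn : m ≤ n) (y : Y) :
    iterComp h n y = iterComp h m y ∨
      (iterComp h n y ∈ ⋃ k ≥ m, V k ∧ iterComp h m y ∈ ⋃ k ≥ m, V k) := by
  induction n, hmn using Nat.le_induction with
  | base => exact Or.inl rfl
  | succ n hmn ih =>
    have hstep : iterComp h (n + 1) y = h n (iterComp h n y) := rfl
    by_cases hv : iterComp h n y ∈ V n
    · have hmaps := (hinj n).mapsTo_of_eqOn_compl (s := V n) (hid n)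
      have hnT : iterComp h n y ∈ ⋃ k ≥ m, V k := mem_biUnion hmn hv
      refine Or.inr ⟨hstep ▸ mem_biUnion hmn (hmaps hv), ?_⟩
      rcases ih with heq | ⟨_, hmT⟩
      · exact heq ▸ hnT
      · exact hmT
    · rwa [hstep, hid n _ hv]

variable [PseudoEMetricSpace Y]

theorem edist_iterComp_le_ediam_tail (hid : ∀ k, ∀ y ∉ V k, h k y = y)
    (hinj : ∀ k, (h k).Injective) {m n : ℕ} (hmn : m ≤ n)
    (y : Y) : edist (iterComp h m y) (iterComp h n y) ≤ ediam (⋃ k ≥ m, V k) := by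
  rcases iterComp_eq_or_mem_tail hid hinj hmn y with heq | ⟨hn, hm⟩
  · simp [heq]
  · exact edist_le_ediam_of_mem hm hn

theorem edist_iterComp_limit_le_ediam_tail (hid : ∀ k, ∀ y ∉ V k, h k y = y)
    (hinj : ∀ k, (h k).Injective) {H : Y → Y}
    (hlim : ∀ y, Tendsto (fun n => iterComp h n y) atTop (𝓝 (H y))) (m : ℕ) (y : Y) :
    edist (iterComp h m y) (H y) ≤ ediam (⋃ k ≥ m, V k) :=
  le_of_tendsto (tendsto_const_nhds.edist (hlim y))
    ((eventually_ge_atTop m).mono fun _ hmn => edist_iterComp_le_ediam_tail hid hinj hmn y)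

theorem tendstoUniformly_iterComp (hid : ∀ k, ∀ y ∉ V k, h k y = y)
    (hinj : ∀ k, (h k).Injective)
    (hdiam : Tendsto (fun n => ediam (⋃ k ≥ n, V k)) atTop (𝓝 0)) {H : Y → Y}
    (hlim : ∀ y, Tendsto (fun n => iterComp h n y) atTop (𝓝 (H y))) :
    TendstoUniformly (fun n => iterComp h n) H atTop := by
  refine EMetric.tendstoUniformly_iff.2 fun ε hε => ?_
  filter_upwards [hdiam.eventually_lt_const hε] with n hn y
  rw [edist_comm]
  exact (edist_iterComp_limit_le_ediam_tail hid hinj hlim n y).trans_lt hn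

end iterComp

/-- If each `h k` is a homeomorphism of a metric space `Y` which is the identity outside
`V k`, the diameters of the tails `⋃_{k ≥ n} V k` tend to `0`, all the `V k` are contained
in the interior of a compact set, and the pointwise limit of the compositions exists and is
a bijection, then that limit is a homeomorphism. -/
theorem stmt_3 {Y : Type*} [MetricSpace Y]
    (h : ℕ → Y → Y) (hh : ∀ k, IsHomeomorph (h k))
    (V : ℕ → Set Y) (hid : ∀ k, ∀ y ∉ V k, h k y = y)
    (hdiam : Tendsto (fun n => EMetric.diam (⋃ k ≥ n, V k)) atTop (𝓝 0))
    (A : Set Y) (hA : IsCompact A) (hVA : (⋃ k, V k) ⊆ interior A)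
    (Hinf : Y → Y) (hlim : ∀ y, Tendsto (fun n => iterComp h n y) atTop (𝓝 (Hinf y)))
    (hbij : Function.Bijective Hinf) :
    IsHomeomorph Hinf := by
  have hinj : ∀ k, (h k).Injective := fun k => (hh k).bijective.1
  have hcont : Continuous Hinf :=
    (tendstoUniformly_iterComp hid hinj hdiam hlim).continuous
      (Eventually.of_forall (continuous_iterComp fun k => (hh k).continuous)).frequently
  have hfix : EqOn Hinf id Aᶜ := fun y hyA => by
    have hyV : y ∉ ⋃ k, V k := fun hyV => hyA (interior_subset (hVA hyV))
    refine tendsto_nhds_unique (hlim y) ?_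
    simp only [iterComp_apply_of_notMem_iUnion hid hyV, tendsto_const_nhds_iff, id]
  exact isHomeomorph_of_bijective_of_eqOn_compl hA hcont hbij hfix
end

section
/- Let f : [0,1] → ℝ³ be the inclusion of a straight line segment (an affine embedding), let p = f(0), and let B be an open ball centered at p in ℝ³. Then the complement B \ f([0,1]) is simply connected (its fundamental group is trivial). -/
/-!
Let `U` be the ball minus the whole ray `{t • v | t ≥ 0}` and `V` the part of the ball lying
beyond the hyperplane through the tip `v` orthogonal to it. Then `U` is star-shaped about any
point of the opposite ray, `V` is convex, and when the segment ends inside the ball the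
complement of the segment is `U ∪ V`; otherwise it is `U` itself. The intersection `U ∩ V` is
the convex set `V` minus a line, which is path-connected because the line has codimension at
least two; so the van Kampen theorem, in the form "an open union of two simply connected sets
with path-connected intersection is simply connected", applies.
-/

open Set Metric RealInnerProductSpace

section VanKampen

variable {X : Type*} [TopologicalSpace X]

theorem IsSimplyConnected.homotopic_of_range_subset {U : Set X} (hU : IsSimplyConnected U)
    {a b : X} {f g : Path a b} (hf : range f ⊆ U) (hg : range g ⊆ U) : f.Homotopic g := by
  have := hU.simplyConnectedSpace
  have ha : a ∈ U := f.source ▸ hf ⟨0, rfl⟩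
  have hb : b ∈ U := f.target ▸ hf ⟨1, rfl⟩
  let lift (γ : Path a b) (hγ : range γ ⊆ U) : Path (⟨a, ha⟩ : U) ⟨b, hb⟩ :=
    { toFun t := ⟨γ t, hγ ⟨t, rfl⟩⟩, source' := by simp, target' := by simp }
  exact (SimplyConnectedSpace.paths_homotopic (lift f hf) (lift g hg)).map
    ⟨Subtype.val, continuous_subtype_val⟩

theorem Path.Homotopic.of_trans_left {a b c : X} {γ : Path a b} {f g : Path b c}
    (h : (γ.trans f).Homotopic (γ.trans g)) : f.Homotopic g := by
  rw [← Path.Homotopic.Quotient.eq] at h ⊢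
  simpa [Path.Homotopic.Quotient.mk_trans, ← Path.Homotopic.Quotient.trans_assoc] using
    congrArg (Path.Homotopic.Quotient.trans (Path.Homotopic.Quotient.mk γ).symm) h

section OpenCover

variable {ι : Type*} {W : ι → Set X} {x₀ : X}

theorem Path.exists_homotopic_range_subset_of_isOpen_cover (hWo : ∀ i, IsOpen (W i))
    (hcov : ⋃ i, W i = univ) (hx₀ : ∀ i, x₀ ∈ W i) (hW : ∀ i, IsSimplyConnected (W i))
    (hWW : ∀ i j, IsPathConnected (W i ∩ W j)) {b : X} (γ : Path x₀ b) {i : ι} (hb : b ∈ W i) :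
    ∃ δ : Path x₀ b, range δ ⊆ W i ∧ γ.Homotopic δ := by
  obtain ⟨t, ht0, ht, ⟨N, htN⟩, hsub⟩ := exists_monotone_Icc_subset_open_cover_unitInterval
    (c := fun i => γ ⁻¹' W i) (fun i => (hWo i).preimage γ.continuous)
    (by simp [← preimage_iUnion, hcov])
  have key (n : ℕ) : ∀ i, γ (t n) ∈ W i → ∃ δ : Path x₀ (γ (t n)),
      range δ ⊆ W i ∧ (γ.subpath 0 (t n)).Homotopic (δ.cast γ.source rfl) := by
    induction n with
    | zero =>
      rw [ht0]
      intro i hi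
      refine ⟨(Path.refl (γ 0)).cast γ.source.symm rfl, by simpa using hi, ?_⟩
      rw [Path.subpath_self]
      rfl
    | succ n ih =>
      intro i hi
      obtain ⟨j, hj⟩ := hsub n
      have htn := ht n.le_succ
      obtain ⟨δ, hδ, hγδ⟩ := ih j (hj ⟨le_rfl, htn⟩)
      obtain ⟨c, hc⟩ := (hWW i j).joinedIn x₀ ⟨hx₀ i, hx₀ j⟩ _ ⟨hi, hj ⟨htn, le_rfl⟩⟩
      refine ⟨c, range_subset_iff.2 fun s => (hc s).1, ?_⟩
      have hpiece : range (γ.subpath (t n) (t (n + 1))) ⊆ W j := by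
        rw [Path.range_subpath_of_le _ _ _ htn, image_subset_iff]
        exact hj
      refine Path.Homotopic.trans
        ⟨(Path.Homotopy.subpathTransSubpath γ 0 (t n) (t (n + 1))).symm⟩ <|
        (hγδ.hcomp (.refl _)).trans ((hW j).homotopic_of_range_subset ?_ ?_)
      · rw [Path.trans_range]
        exact union_subset hδ hpiece
      · exact range_subset_iff.2 fun s => (hc s).2
  have hγb : γ 1 ∈ W i := by rwa [γ.target]
  have := key N
  rw [htN N le_rfl] at this
  obtain ⟨δ, hδ, hγδ⟩ := this i hγb
  rw [Path.subpath_zero_one] at hγδ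
  -- a homotopy only sees the underlying maps, so `Path.cast` is transparent to `Homotopic`
  exact ⟨δ.cast rfl γ.target.symm, hδ, hγδ⟩

theorem SimplyConnectedSpace.of_isOpen_cover (hWo : ∀ i, IsOpen (W i)) (hcov : ⋃ i, W i = univ)
    (hx₀ : ∀ i, x₀ ∈ W i) (hW : ∀ i, IsSimplyConnected (W i))
    (hWW : ∀ i j, IsPathConnected (W i ∩ W j)) : SimplyConnectedSpace X := by
  have hcover (y : X) : ∃ i, y ∈ W i := mem_iUnion.1 (hcov ▸ mem_univ y)
  have hjoined (y : X) : Joined x₀ y := by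
    obtain ⟨i, hi⟩ := hcover y
    exact ((hW i).isPathConnected.joinedIn x₀ (hx₀ i) y hi).joined
  refine simply_connected_iff_paths_homotopic'.2
    ⟨⟨⟨x₀⟩, fun y z => (hjoined y).symm.trans (hjoined z)⟩, fun {a b} f g => ?_⟩
  obtain ⟨c⟩ := hjoined a
  obtain ⟨i, hb⟩ := hcover b
  obtain ⟨δ, hδ, hfδ⟩ :=
    (c.trans f).exists_homotopic_range_subset_of_isOpen_cover hWo hcov hx₀ hW hWW hb
  obtain ⟨δ', hδ', hgδ'⟩ :=
    (c.trans g).exists_homotopic_range_subset_of_isOpen_cover hWo hcov hx₀ hW hWW hb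
  exact Path.Homotopic.of_trans_left <|
    (hfδ.trans ((hW i).homotopic_of_range_subset hδ hδ')).trans hgδ'.symm

end OpenCover

theorem IsOpen.isSimplyConnected_union {U V : Set X} (hUo : IsOpen U) (hVo : IsOpen V)
    (hU : IsSimplyConnected U) (hV : IsSimplyConnected V) (hUV : IsPathConnected (U ∩ V)) :
    IsSimplyConnected (U ∪ V) := by
  obtain ⟨x₀, hx₀U, hx₀V⟩ := hUV.nonempty
  let W (b : Bool) : Set ↥(U ∪ V) := Subtype.val ⁻¹' cond b U V
  have hsc {S : Set X} (hS : S ⊆ U ∪ V) (h : IsSimplyConnected S) :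
      IsSimplyConnected (Subtype.val ⁻¹' S : Set ↥(U ∪ V)) := by
    rwa [← Topology.IsEmbedding.subtypeVal.isSimplyConnected_image, Subtype.image_preimage_coe,
      inter_eq_right.2 hS]
  refine SimplyConnectedSpace.of_isOpen_cover (W := W) (x₀ := ⟨x₀, .inl hx₀U⟩) ?_ ?_ ?_ ?_ ?_
  · simp only [W, Bool.forall_bool, cond_false, cond_true]
    exact ⟨hVo.preimage continuous_subtype_val, hUo.preimage continuous_subtype_val⟩
  · ext ⟨x, hx⟩
    simpa [W, or_comm] using hx
  · simp [W, Bool.forall_bool, hx₀U, hx₀V]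
  · simp only [W, Bool.forall_bool, cond_false, cond_true]
    exact ⟨hsc subset_union_right hV, hsc subset_union_left hU⟩
  · simp only [W, ← preimage_inter, Bool.forall_bool, cond_false, cond_true, inter_self,
      inter_comm V U]
    have hpc {S : Set X} (hS : S ⊆ U ∪ V) (h : IsPathConnected S) :
        IsPathConnected (Subtype.val ⁻¹' S : Set ↥(U ∪ V)) := h.preimage_coe hS
    exact ⟨⟨hpc subset_union_right hV.isPathConnected,
      hpc (inter_subset_left.trans subset_union_left) hUV⟩,
      hpc (inter_subset_left.trans subset_union_left) hUV, hpc subset_union_left hU.isPathConnected⟩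

end VanKampen

section Convexity

variable {F : Type*} [AddCommGroup F] [Module ℝ F] [TopologicalSpace F] [ContinuousAdd F]
  [ContinuousSMul ℝ F] {s : Set F}

theorem StarConvex.isSimplyConnected {x : F} (h : StarConvex ℝ x s) (hx : x ∈ s) :
    IsSimplyConnected s :=
  have := h.contractibleSpace ⟨x, hx⟩
  SimplyConnectedSpace.ofContractible s

theorem Convex.isSimplyConnected (h : Convex ℝ s) (hne : s.Nonempty) : IsSimplyConnected s :=
  have := h.contractibleSpace hne
  SimplyConnectedSpace.ofContractible s

end Convexity

theorem Convex.starConvex_diff_ray {F : Type*} [AddCommGroup F] [Module ℝ F] {C : Set F}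
    (hC : Convex ℝ C) {v : F} (hv : v ≠ 0) {s : ℝ} (hs : s < 0) (hsC : s • v ∈ C) :
    StarConvex ℝ (s • v) (C \ (fun t : ℝ => t • v) '' Ici 0) := by
  rintro y ⟨hyC, hyR⟩ a b ha hb hab
  refine ⟨hC hsC hyC ha hb hab, ?_⟩
  rintro ⟨t, ht, hty⟩
  rcases hb.eq_or_lt with rfl | hb
  · have : t = s := smul_left_injective ℝ hv (by simpa [show a = 1 by linarith] using hty)
    linarith [mem_Ici.1 ht]
  · refine hyR ⟨(t - a * s) / b, div_nonneg (by nlinarith [mem_Ici.1 ht]) hb.le, ?_⟩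
    have hy : y = b⁻¹ • (t • v - a • s • v) := by
      rw [show t • v = _ from hty, add_sub_cancel_left, smul_smul, inv_mul_cancel₀ hb.ne',
        one_smul]
    rw [hy]
    module

variable {E : Type*} [NormedAddCommGroup E] [InnerProductSpace ℝ E]

def ballDiffRay (r : ℝ) (v : E) : Set E := ball 0 r \ (fun t : ℝ => t • v) '' Ici 0

def ballBeyond (r : ℝ) (v : E) : Set E := ball 0 r ∩ {x | ‖v‖ ^ 2 < ⟪v, x⟫}

variable {r : ℝ} {v : E}

theorem isOpen_ballDiffRay : IsOpen (ballDiffRay r v) :=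
  isOpen_ball.sdiff (isClosedMap_smul_left v _ isClosed_Ici)

theorem isOpen_ballBeyond : IsOpen (ballBeyond r v) :=
  isOpen_ball.inter (isOpen_lt continuous_const (continuous_const.inner continuous_id))

theorem convex_ballBeyond : Convex ℝ (ballBeyond r v) :=
  (convex_ball 0 r).inter (convex_halfSpace_gt (innerₛₗ ℝ v).isLinear _)

theorem isSimplyConnected_ballDiffRay (hv : v ≠ 0) (hr : 0 < r) :
    IsSimplyConnected (ballDiffRay r v) := by
  have hv' := norm_pos_iff.2 hv
  set s := -(r / (2 * ‖v‖))
  have hs : s < 0 := neg_neg_of_pos (by positivity)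
  have hsball : s • v ∈ ball 0 r := by
    rw [mem_ball_zero_iff, norm_smul, Real.norm_of_nonpos hs.le, neg_neg, div_mul_eq_mul_div,
      mul_div_mul_right _ _ hv'.ne']
    linarith
  have hsray : s • v ∉ (fun t : ℝ => t • v) '' Ici 0 := by
    rintro ⟨t, ht, hts⟩
    linarith [mem_Ici.1 ht, smul_left_injective ℝ hv hts]
  exact ((convex_ball 0 r).starConvex_diff_ray hv hs hsball).isSimplyConnected ⟨hsball, hsray⟩

theorem ball_diff_segment_eq_union (hv : v ≠ 0) :
    ball 0 r \ (fun t : ℝ => t • v) '' Icc 0 1 = ballDiffRay r v ∪ ballBeyond r v := by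
  have hv' : 0 < ‖v‖ ^ 2 := by positivity
  ext x
  constructor
  · rintro ⟨hx, hxseg⟩
    by_cases hxray : x ∈ (fun t : ℝ => t • v) '' Ici 0
    · obtain ⟨t, ht, rfl⟩ := hxray
      have ht1 : 1 < t := not_le.1 fun h => hxseg ⟨t, ⟨ht, h⟩, rfl⟩
      refine .inr ⟨hx, ?_⟩
      simp only [mem_ofPred_eq, real_inner_smul_self_right]
      nlinarith
    · exact .inl ⟨hx, hxray⟩
  · rintro (⟨hx, hxray⟩ | ⟨hx, hxv⟩)
    · exact ⟨hx, fun hxseg => hxray (image_mono Icc_subset_Ici_self hxseg)⟩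
    · refine ⟨hx, ?_⟩
      rintro ⟨t, ⟨-, ht⟩, rfl⟩
      simp only [mem_ofPred_eq, real_inner_smul_self_right] at hxv
      nlinarith

theorem ball_diff_segment_eq_ballDiffRay (h : r ≤ ‖v‖) :
    ball 0 r \ (fun t : ℝ => t • v) '' Icc 0 1 = ballDiffRay r v := by
  refine Subset.antisymm (fun x ⟨hx, hxseg⟩ => ⟨hx, ?_⟩)
    (sdiff_subset_sdiff_right (image_mono Icc_subset_Ici_self))
  rintro ⟨t, ht, rfl⟩
  rw [mem_ball_zero_iff, norm_smul, Real.norm_of_nonneg ht] at hx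
  exact hxseg ⟨t, ⟨ht, by nlinarith [norm_nonneg v]⟩, rfl⟩

theorem ballDiffRay_inter_ballBeyond (hv : v ≠ 0) :
    ballDiffRay r v ∩ ballBeyond r v = ballBeyond r v \ (ℝ ∙ v) := by
  have hv' : 0 < ‖v‖ ^ 2 := by positivity
  ext x
  simp only [ballDiffRay, ballBeyond, mem_inter_iff, mem_sdiff, mem_ofPred_eq, SetLike.mem_coe,
    Submodule.mem_span_singleton, mem_image, mem_Ici]
  constructor
  · rintro ⟨⟨-, hxray⟩, hx, hxv⟩
    refine ⟨⟨hx, hxv⟩, fun ⟨t, htx⟩ => hxray ⟨t, ?_, htx⟩⟩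
    rw [← htx, real_inner_smul_self_right] at hxv
    nlinarith
  · rintro ⟨⟨hx, hxv⟩, hxspan⟩
    exact ⟨⟨hx, fun ⟨t, _, htx⟩ => hxspan ⟨t, htx⟩⟩, hx, hxv⟩

theorem one_lt_rank_quotient_span_singleton (hE : 2 < Module.rank ℝ E) (v : E) :
    1 < Module.rank ℝ (E ⧸ ℝ ∙ v) := by
  by_contra! h
  have := rank_quotient_add_rank_of_divisionRing (ℝ ∙ v)
  have hK : Module.rank ℝ (ℝ ∙ v) ≤ 1 := by simpa using rank_span_le (R := ℝ) {v}
  have := add_le_add h hK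
  rw [one_add_one_eq_two, rank_quotient_add_rank_of_divisionRing] at this
  exact (not_le.2 hE) this

theorem isPathConnected_ballBeyond_diff_span (hE : 2 < Module.rank ℝ E) (hv : v ≠ 0)
    (hr : ‖v‖ < r) : IsPathConnected (ballBeyond r v \ (ℝ ∙ v)) := by
  set K := ℝ ∙ v
  set π := Kᗮ.starProjection
  have hπ_eq_zero (x : E) : π x = 0 ↔ x ∈ K := by
    rw [Submodule.starProjection_apply_eq_zero_iff, Submodule.orthogonal_orthogonal]
  have hπv : π v = 0 := (hπ_eq_zero v).2 (Submodule.mem_span_singleton_self v)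
  have hπ_inner (x : E) : ⟪v, π x⟫ = 0 :=
    Submodule.mem_orthogonal_singleton_iff_inner_right.1 (Kᗮ.starProjection_apply_mem x)
  have hππ (x : E) : π (π x) = π x :=
    Submodule.starProjection_eq_self_iff.2 (Kᗮ.starProjection_apply_mem x)
  have hv' : 0 < ‖v‖ := norm_pos_iff.2 hv
  obtain ⟨c, hc1, hcr⟩ : ∃ c, 1 < c ∧ c < r / ‖v‖ := exists_between ((one_lt_div hv').2 hr)
  rw [lt_div_iff₀ hv'] at hcr
  set ρ := (r - c * ‖v‖) / 2
  have hρ : 0 < ρ := by simp only [ρ]; linarith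
  -- `g` maps `Kᶜ` onto the `ρ`-sphere of the slice `c • v + Kᗮ`; along the segment from `z` to
  -- `g z` the component of `z` orthogonal to `v` is only rescaled, so the segment avoids `K`
  let g (x : E) : E := c • v + (ρ / ‖π x‖) • π x
  have hπg (x : E) : π (g x) = (ρ / ‖π x‖) • π x := by
    simp only [g, map_add, map_smul, hπv, hππ, smul_zero, zero_add]
  have hg (x : E) (hx : x ∉ K) : g x ∈ ballBeyond r v \ K := by
    have hπx : 0 < ‖π x‖ := norm_pos_iff.2 ((hπ_eq_zero x).not.2 hx)
    refine ⟨⟨?_, ?_⟩, fun hgx => ?_⟩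
    · rw [mem_ball_zero_iff]
      calc ‖g x‖ ≤ ‖c • v‖ + ‖(ρ / ‖π x‖) • π x‖ := norm_add_le _ _
        _ = c * ‖v‖ + ρ := by
          rw [norm_smul, norm_smul, Real.norm_of_nonneg (by linarith),
            Real.norm_of_nonneg (by positivity), div_mul_cancel₀ _ hπx.ne']
        _ < r := by simp only [ρ]; linarith
    · simp only [mem_ofPred_eq, g, inner_add_right, real_inner_smul_self_right,
        real_inner_smul_right, hπ_inner, mul_zero, add_zero]
      nlinarith [pow_pos hv' 2]
    · rw [SetLike.mem_coe, ← hπ_eq_zero, hπg] at hgx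
      exact smul_ne_zero (by positivity) (norm_pos_iff.1 hπx) hgx
  have hseg (z : E) (hz : z ∈ ballBeyond r v \ K) : segment ℝ z (g z) ⊆ ballBeyond r v \ K := by
    have hπz : 0 < ‖π z‖ := norm_pos_iff.2 ((hπ_eq_zero z).not.2 hz.2)
    rintro _ ⟨a, b, ha, hb, hab, rfl⟩
    refine ⟨convex_ballBeyond hz.1 (hg z hz.2).1 ha hb hab, fun hmem => ?_⟩
    rw [SetLike.mem_coe, ← hπ_eq_zero, map_add, map_smul, map_smul, hπg, smul_smul,
      ← add_smul] at hmem
    have hcoef : 0 < a + b * (ρ / ‖π z‖) := by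
      rcases ha.eq_or_lt with rfl | ha
      · rw [zero_add] at hab ⊢
        rw [hab, one_mul]
        positivity
      · positivity
    exact smul_ne_zero hcoef.ne' (norm_pos_iff.1 hπz) hmem
  have hgc : ContinuousOn g (K : Set E)ᶜ :=
    continuousOn_const.add <| (continuousOn_const.div π.continuous.norm.continuousOn
      fun x hx => norm_ne_zero_iff.2 ((hπ_eq_zero x).not.2 hx)).smul π.continuous.continuousOn
  obtain ⟨y₀, ⟨x₀, hx₀, rfl⟩, hjoin⟩ :=
    (isPathConnected_compl_of_one_lt_codim (one_lt_rank_quotient_span_singleton hE v)).image' hgc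
  have hST : g '' (K : Set E)ᶜ ⊆ ballBeyond r v \ K := image_subset_iff.2 hg
  exact ⟨g x₀, hg x₀ hx₀, fun z hz => ((hjoin (mem_image_of_mem g hz.2)).mono hST).trans
    (JoinedIn.of_segment_subset (hseg z hz)).symm⟩

theorem isSimplyConnected_ball_diff_segment (hE : 2 < Module.rank ℝ E) (p : E) (hv : v ≠ 0)
    (hr : 0 < r) : IsSimplyConnected (ball p r \ (fun t : ℝ => p + t • v) '' Icc 0 1) := by
  have hball : (p + ·) '' (ball 0 r \ (fun t : ℝ => t • v) '' Icc 0 1) =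
      ball p r \ (fun t : ℝ => p + t • v) '' Icc 0 1 := by
    rw [image_sdiff (add_right_injective p), image_image]
    simp
  rw [← hball]
  refine (Homeomorph.addLeft p).isSimplyConnected_image.2 ?_
  rcases le_or_gt r ‖v‖ with hrv | hrv
  · rw [ball_diff_segment_eq_ballDiffRay hrv]
    exact isSimplyConnected_ballDiffRay hv hr
  · have hUV := isPathConnected_ballBeyond_diff_span hE hv hrv
    rw [← ballDiffRay_inter_ballBeyond hv] at hUV
    rw [ball_diff_segment_eq_union hv]
    exact isOpen_ballDiffRay.isSimplyConnected_union isOpen_ballBeyond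
      (isSimplyConnected_ballDiffRay hv hr)
      (convex_ballBeyond.isSimplyConnected (hUV.nonempty.mono inter_subset_right)) hUV

/-- An open ball in `ℝ³` minus a straight line segment starting at its center (the image
under the affine embedding `t ↦ p + t • v` of `[0,1]`) is simply connected. -/
theorem stmt_15 (p v : EuclideanSpace ℝ (Fin 3)) (hv : v ≠ 0) (r : ℝ) (hr : 0 < r) :
    SimplyConnectedSpace
      ↥(Metric.ball p r \ (fun t : ℝ => p + t • v) '' Set.Icc (0:ℝ) 1) := by
  have hE : 2 < Module.rank ℝ (EuclideanSpace ℝ (Fin 3)) := by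
    rw [← Module.finrank_eq_rank, finrank_euclideanSpace_fin]
    norm_num
  exact isSimplyConnected_ball_diff_segment hE p hv hr
end
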